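/- The subspace Z is invariant under A and under 1 − A (i.e. A(Z) ⊆ Z and (1 − A)(Z) ⊆ Z), and the restrictions A|_Z and (1 − A)|_Z are injective operators on Z whose ranges are dense in Z. -/

import Mathlib

open scoped InnerProductSpace

variable {H₀ H₁ : Type*} [NormedAddCommGroup H₀] [InnerProductSpace ℂ H₀] [CompleteSpace H₀]
  [NormedAddCommGroup H₁] [InnerProductSpace ℂ H₁] [CompleteSpace H₁]

/-- First coordinate projection `H₀ ⊕₂ H₁ → H₀` as a linear map. -/
noncomputable def P0 : WithLp 2 (H₀ × H₁) →ₗ[ℂ] H₀ :=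
  (LinearMap.fst ℂ H₀ H₁) ∘ₗ (WithLp.linearEquiv 2 ℂ (H₀ × H₁)).toLinearMap

/-!
Both `A` and `1 - A` are symmetric, and `K = ker (1 - A) ⊔ ker A` is invariant under `A`
(which fixes `ker (1 - A)` and kills `ker A`), hence also under `1 - A`. For a symmetric operator `B`
leaving `K` invariant, `Kᗮ` is invariant too; if moreover `ker B ≤ K`, then `B` is injective on
`Kᗮ`, and any `w ∈ Kᗮ` orthogonal to `B (Kᗮ)` has `B w ∈ Kᗮ ∩ (Kᗮ)ᗮ = 0`, so `w ∈ ker B ∩ Kᗮ = 0`.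
Since `Kᗮ` is closed in a complete space, this forces `B (Kᗮ)` to be dense in `Kᗮ`.
-/

namespace Submodule

variable {𝕜 E : Type*} [RCLike 𝕜] [NormedAddCommGroup E] [InnerProductSpace 𝕜 E]
  [CompleteSpace E]

theorem topologicalClosure_eq_of_orthogonal_inf_eq_bot {M N : Submodule 𝕜 E} (hMN : M ≤ N)
    (hN : IsClosed (N : Set E)) (h : Mᗮ ⊓ N = ⊥) : M.topologicalClosure = N := by
  have hle : M.topologicalClosure ≤ N := M.topologicalClosure_minimal hMN hN
  have : CompleteSpace M.topologicalClosure := M.isClosed_topologicalClosure.completeSpace_coe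
  simpa [orthogonal_closure, h] using sup_orthogonal_inf_of_hasOrthogonalProjection hle

end Submodule

namespace Module.End

variable {R M : Type*} [Ring R] [AddCommGroup M] [Module R M]

theorem ker_one_sub_sup_ker_mem_invtSubmodule (f : End R M) :
    LinearMap.ker (1 - f) ⊔ LinearMap.ker f ∈ f.invtSubmodule := by
  refine invtSubmodule.sup_mem (fun x hx ↦ ?_) (fun _ hx ↦ ?_)
  · have hfx : f x = x := (sub_eq_zero.mp (LinearMap.mem_ker.mp hx)).symm
    rwa [Submodule.mem_comap, hfx]
  · rw [Submodule.mem_comap, LinearMap.mem_ker.mp hx]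
    exact zero_mem _

theorem one_sub_mem_invtSubmodule {f : End R M} {p : Submodule R M}
    (hp : p ∈ f.invtSubmodule) : p ∈ (1 - f).invtSubmodule :=
  fun _ hx ↦ p.sub_mem hx (hp hx)

end Module.End

namespace LinearMap

variable {𝕜 E F : Type*} [RCLike 𝕜] [NormedAddCommGroup E] [InnerProductSpace 𝕜 E]
  [NormedAddCommGroup F] [InnerProductSpace 𝕜 F]

theorem isSymmetric_of_inner_apply_eq_inner (T : E →ₗ[𝕜] E) (S : E →ₗ[𝕜] F)
    (h : ∀ x y, ⟪T x, y⟫_𝕜 = ⟪S x, S y⟫_𝕜) : T.IsSymmetric := fun x y ↦ by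
  rw [h, ← inner_conj_symm, ← h, inner_conj_symm]

variable {B : E →ₗ[𝕜] E} {K : Submodule 𝕜 E}

theorem injOn_orthogonal_of_ker_le (hker : ker B ≤ K) : Set.InjOn B (Kᗮ : Set E) :=
  injOn_of_disjoint_ker le_rfl ((Submodule.orthogonal_disjoint K).symm.mono_right hker)

namespace IsSymmetric

theorem orthogonal_mem_invtSubmodule (hB : B.IsSymmetric) (hK : K ∈ Module.End.invtSubmodule B) :
    Kᗮ ∈ Module.End.invtSubmodule B := fun v hv w hw ↦ by
  rw [← hB]
  exact hv _ (hK hw)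

theorem orthogonal_map_orthogonal_inf_orthogonal (hB : B.IsSymmetric)
    (hK : K ∈ Module.End.invtSubmodule B) (hker : ker B ≤ K) : (Kᗮ.map B)ᗮ ⊓ Kᗮ = ⊥ := by
  refine (Submodule.eq_bot_iff _).mpr fun w ⟨hwB, hwK⟩ ↦ ?_
  have hBw : B w ∈ Kᗮᗮ := fun z hz ↦ by
    rw [inner_eq_zero_symm, hB, inner_eq_zero_symm]
    exact hwB _ ⟨z, hz, rfl⟩
  have hBw_zero : B w = 0 :=
    Submodule.disjoint_def.mp (Submodule.orthogonal_disjoint Kᗮ)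
      _ (hB.orthogonal_mem_invtSubmodule hK hwK) hBw
  exact Submodule.disjoint_def.mp (Submodule.orthogonal_disjoint K) _ (hker hBw_zero) hwK

theorem topologicalClosure_map_orthogonal [CompleteSpace E] (hB : B.IsSymmetric)
    (hK : K ∈ Module.End.invtSubmodule B) (hker : ker B ≤ K) : (Kᗮ.map B).topologicalClosure = Kᗮ :=
  Submodule.topologicalClosure_eq_of_orthogonal_inf_eq_bot
    ((Module.End.mem_invtSubmodule_iff_map_le _).mp (hB.orthogonal_mem_invtSubmodule hK))
    K.isClosed_orthogonal (hB.orthogonal_map_orthogonal_inf_orthogonal hK hker)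

end IsSymmetric

end LinearMap

/-- `Z = (Y₀ ⊔ Y₁)ᗮ` is invariant under `A` and `1 - A`, and the restrictions of `A` and
`1 - A` to `Z` are injective with dense range in `Z`. -/
theorem stmt_5 (Y : Submodule ℂ (WithLp 2 (H₀ × H₁)))
    (hY : IsClosed (Y : Set (WithLp 2 (H₀ × H₁))))
    (A : Y →L[ℂ] Y)
    (hA : ∀ x y : Y,
      ⟪A x, y⟫_ℂ = ⟪P0 (x : WithLp 2 (H₀ × H₁)), P0 (y : WithLp 2 (H₀ × H₁))⟫_ℂ)
    (Y₀ Y₁ Z : Submodule ℂ Y)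
    (hY₀ : Y₀ = LinearMap.ker ((1 - A : Y →L[ℂ] Y) : Y →ₗ[ℂ] Y)) (hY₁ : Y₁ = LinearMap.ker (A : Y →ₗ[ℂ] Y))
    (hZ : Z = (Y₀ ⊔ Y₁)ᗮ) :
    Submodule.map (A : Y →ₗ[ℂ] Y) Z ≤ Z ∧ Submodule.map ((1 - A : Y →L[ℂ] Y) : Y →ₗ[ℂ] Y) Z ≤ Z ∧
    Set.InjOn ⇑A (Z : Set Y) ∧ Set.InjOn ⇑(1 - A : Y →L[ℂ] Y) (Z : Set Y) ∧
    (Submodule.map (A : Y →ₗ[ℂ] Y) Z).topologicalClosure = Z ∧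
    (Submodule.map ((1 - A : Y →L[ℂ] Y) : Y →ₗ[ℂ] Y) Z).topologicalClosure = Z := by
  have : CompleteSpace Y := hY.completeSpace_coe
  set B : Y →ₗ[ℂ] Y := (A : Y →ₗ[ℂ] Y)
  have hB : B.IsSymmetric := LinearMap.isSymmetric_of_inner_apply_eq_inner B (P0 ∘ₗ Y.subtype) hA
  have h1B : (1 - B).IsSymmetric := LinearMap.IsSymmetric.one.sub hB
  have hK : Y₀ ⊔ Y₁ ∈ Module.End.invtSubmodule B := by
    rw [hY₀, hY₁]
    exact Module.End.ker_one_sub_sup_ker_mem_invtSubmodule B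
  have h1K : Y₀ ⊔ Y₁ ∈ Module.End.invtSubmodule (1 - B) := Module.End.one_sub_mem_invtSubmodule hK
  have hker : LinearMap.ker B ≤ Y₀ ⊔ Y₁ := hY₁ ▸ le_sup_right
  have h1ker : LinearMap.ker (1 - B) ≤ Y₀ ⊔ Y₁ := hY₀ ▸ le_sup_left
  rw [ContinuousLinearMap.toLinearMap_sub, ContinuousLinearMap.toLinearMap_one, hZ]
  exact ⟨(Module.End.mem_invtSubmodule_iff_map_le _).mp (hB.orthogonal_mem_invtSubmodule hK),
    (Module.End.mem_invtSubmodule_iff_map_le _).mp (h1B.orthogonal_mem_invtSubmodule h1K),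
    LinearMap.injOn_orthogonal_of_ker_le hker, LinearMap.injOn_orthogonal_of_ker_le h1ker,
    hB.topologicalClosure_map_orthogonal hK hker, h1B.topologicalClosure_map_orthogonal h1K h1ker⟩
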